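/- Let G be a linearly ordered additive group (a group with a linear order compatible with addition on both sides), and let T be a G-graded ring with grading 𝒜 : G → AddSubgroup T. If a, b ∈ T are non-zero elements with a * b = 0, then there exist non-zero homogeneous elements x, y ∈ T (i.e. x ∈ 𝒜 g, y ∈ 𝒜 h for some g, h ∈ G) with x * y = 0. (One may take x and y to be the leading components of a and b with respect to the order on G.) -/
import Mathlib

/-- Let `G` be a linearly ordered additive group (the order compatible with addition on
both sides), and `T` a `G`-graded ring.  If `a, b ∈ T` are non-zero with `a * b = 0`,
then there exist non-zero *homogeneous* elements `x, y ∈ T` with `x * y = 0`. -/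
theorem exists_homogeneous_zero_divisors_of_ordered_grading
    {G : Type*} [AddGroup G] [LinearOrder G] [DecidableEq G]
    [CovariantClass G G (· + ·) (· ≤ ·)]
    [CovariantClass G G (Function.swap (· + ·)) (· ≤ ·)]
    {T : Type*} [Ring T] (𝒜 : G → AddSubgroup T) [GradedRing 𝒜]
    (a b : T) (ha : a ≠ 0) (hb : b ≠ 0) (hab : a * b = 0) :
    ∃ (g h : G) (x y : T), x ∈ 𝒜 g ∧ y ∈ 𝒜 h ∧ x ≠ 0 ∧ y ≠ 0 ∧ x * y = 0 := by
  classical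
  set A := DirectSum.decompose 𝒜 a with hA
  set B := DirectSum.decompose 𝒜 b with hB
  have hAne : A.support.Nonempty := by
    rw [Finset.nonempty_iff_ne_empty]
    intro h
    apply ha
    have h0 : A = DirectSum.decompose 𝒜 0 := by
      rw [DirectSum.decompose_zero]; exact DFinsupp.support_eq_empty.mp h
    exact (DirectSum.decompose 𝒜).injective (hA ▸ h0)
  have hBne : B.support.Nonempty := by
    rw [Finset.nonempty_iff_ne_empty]
    intro h
    apply hb
    have h0 : B = DirectSum.decompose 𝒜 0 := by
      rw [DirectSum.decompose_zero]; exact DFinsupp.support_eq_empty.mp h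
    exact (DirectSum.decompose 𝒜).injective (hB ▸ h0)
  set g := A.support.max' hAne with hg
  set h := B.support.max' hBne with hh
  have hgmem : g ∈ A.support := Finset.max'_mem _ _
  have hhmem : h ∈ B.support := Finset.max'_mem _ _
  refine ⟨g, h, A g, B h, SetLike.coe_mem _, SetLike.coe_mem _,
    by simpa using DFinsupp.mem_support_iff.mp hgmem,
    by simpa using DFinsupp.mem_support_iff.mp hhmem, ?_⟩
  have key : ((A * B) (g + h) : T) = (A g : T) * (B h : T) := by
    rw [DirectSum.coe_mul_apply 𝒜]
    have hfilter : (A.support ×ˢ B.support).filter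
        (fun ij : G × G => ij.1 + ij.2 = g + h) = {(g, h)} := by
      apply Finset.eq_singleton_iff_unique_mem.mpr
      constructor
      · simp [hgmem, hhmem]
      · rintro ⟨i, j⟩ hij
        simp only [Finset.mem_filter, Finset.mem_product] at hij
        obtain ⟨⟨hi, hj⟩, hsum⟩ := hij
        have hi' : i ≤ g := Finset.le_max' _ _ hi
        have hj' : j ≤ h := Finset.le_max' _ _ hj
        have : i = g := by
          by_contra hne
          have : i < g := lt_of_le_of_ne hi' hne
          have : i + j < g + h := add_lt_add_of_lt_of_le this hj'
          exact absurd hsum this.ne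
        subst this
        have : j = h := add_left_cancel hsum
        subst this
        rfl
    rw [hfilter, Finset.sum_singleton]
  have hAB : A * B = 0 := by
    have : A * B = DirectSum.decompose 𝒜 (a * b) := by
      rw [hA, hB, DirectSum.decompose_mul]
    rw [this, hab, DirectSum.decompose_zero]
  rw [hAB] at key
  simpa using key.symm
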